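/- For every t > 0 and every z with 0 ≤ z < e^t − 1, the function b ↦ E(z,t;0,b) is differentiable at b = 0 and its derivative equals (1/(2((e^t − 1)² − z²)·√((e^t + 1)² − z²))) · [ (1 − e^{2t} + z²)·F(−1/2, 1/2; 1; ζ) + 2(e^t − 1)·F(1/2, 1/2; 1; ζ) ], where ζ := ((e^t − 1)² − z²)/((e^t + 1)² − z²). In particular, this derivative equals −K0(z,t). -/

import Mathlib

open MeasureTheory Real intervalIntegral

/-- Rising factorial (Pochhammer symbol) `(q)_n = q (q+1) ⋯ (q+n−1)`. -/
noncomputable def risingFactorial (q : ℝ) : ℕ → ℝ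
  | 0 => 1
  | n + 1 => risingFactorial q n * (q + (n : ℝ))

/-- The Gauss hypergeometric function `F(a,b;c;x)` defined by its power series
`∑ ((a)_n (b)_n / ((c)_n n!)) x^n`. -/
noncomputable def hyperF (a b c x : ℝ) : ℝ :=
  ∑' n : ℕ, (risingFactorial a n * risingFactorial b n) /
    (risingFactorial c n * (Nat.factorial n : ℝ)) * x ^ n

/-- The kernel
`E(x,t;0,t₀) = ((e^{t₀}+e^t)² − x²)^{−1/2} F(1/2,1/2;1;((e^t−e^{t₀})²−x²)/((e^t+e^{t₀})²−x²))`. -/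
noncomputable def Eker (x t t₀ : ℝ) : ℝ :=
  ((Real.exp t₀ + Real.exp t) ^ 2 - x ^ 2) ^ (-(1 : ℝ) / 2) *
    hyperF (1 / 2) (1 / 2) 1
      (((Real.exp t - Real.exp t₀) ^ 2 - x ^ 2) / ((Real.exp t + Real.exp t₀) ^ 2 - x ^ 2))

/-- The kernel `K1(z,t) = ((1+e^t)²−z²)^{−1/2} F(1/2,1/2;1;((e^t−1)²−z²)/((e^t+1)²−z²))`. -/
noncomputable def K1 (z t : ℝ) : ℝ :=
  ((1 + Real.exp t) ^ 2 - z ^ 2) ^ (-(1 : ℝ) / 2) *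
    hyperF (1 / 2) (1 / 2) 1
      (((Real.exp t - 1) ^ 2 - z ^ 2) / ((Real.exp t + 1) ^ 2 - z ^ 2))

/-- The kernel `K0(z,t)`. -/
noncomputable def K0 (z t : ℝ) : ℝ :=
  -(1 / (2 * ((Real.exp t - 1) ^ 2 - z ^ 2) * Real.sqrt ((Real.exp t + 1) ^ 2 - z ^ 2))) *
    ((1 - Real.exp (2 * t) + z ^ 2) *
        hyperF (-(1 / 2)) (1 / 2) 1
          (((Real.exp t - 1) ^ 2 - z ^ 2) / ((Real.exp t + 1) ^ 2 - z ^ 2))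
      + 2 * (Real.exp t - 1) *
        hyperF (1 / 2) (1 / 2) 1
          (((Real.exp t - 1) ^ 2 - z ^ 2) / ((Real.exp t + 1) ^ 2 - z ^ 2)))

/-! Writing `f n`, `g n` for the coefficients of `F(1/2,1/2;1;·)` and `F(-1/2,1/2;1;·)`, the
coefficient identity `g (n+1) = (2n+3) f (n+1) - (2n+1) f n` says that
`(1 - x) ∑ (2n+1) f n xⁿ = F(-1/2,1/2;1;x)`; differentiating the series termwise, this is the
contiguous relation `2x(1-x) F'(x) = F(-1/2,1/2;1;x) - (1-x) F(1/2,1/2;1;x)` for `0 < |x| < 1`.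
The chain rule then differentiates `t₀ ↦ E(x,t;0,t₀)` at any `t₀` with `x² < (eᵗ - e^{t₀})²`,
using `1 - ζ = 4 eᵗ e^{t₀} / ((eᵗ + e^{t₀})² - x²)`, and `t₀ = 0` gives the formula. -/

noncomputable def hyperCoeff (a b c : ℝ) (n : ℕ) : ℝ :=
  risingFactorial a n * risingFactorial b n / (risingFactorial c n * (Nat.factorial n : ℝ))

theorem hyperF_eq_tsum (a b c x : ℝ) : hyperF a b c x = ∑' n, hyperCoeff a b c n * x ^ n := rfl

@[simp]
theorem hyperCoeff_zero (a b c : ℝ) : hyperCoeff a b c 0 = 1 := by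
  simp [hyperCoeff, risingFactorial]

theorem risingFactorial_one (n : ℕ) : risingFactorial 1 n = n.factorial := by
  induction n with
  | zero => simp [risingFactorial]
  | succ n ih => rw [risingFactorial, ih, Nat.factorial_succ]; push_cast; ring

theorem abs_risingFactorial_le_factorial {q : ℝ} (hq : |q| ≤ 1) (n : ℕ) :
    |risingFactorial q n| ≤ n.factorial := by
  induction n with
  | zero => simp [risingFactorial]
  | succ n ih =>
    have hqn : |q + n| ≤ n + 1 := (abs_add_le _ _).trans (by rw [Nat.abs_cast]; linarith)
    rw [risingFactorial, abs_mul, Nat.factorial_succ, Nat.cast_mul, mul_comm ((n + 1 : ℕ) : ℝ)]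
    push_cast
    exact mul_le_mul ih hqn (abs_nonneg _) (Nat.cast_nonneg _)

theorem risingFactorial_sub_one_mul (q : ℝ) (n : ℕ) :
    risingFactorial (q - 1) n * (q - 1 + n) = (q - 1) * risingFactorial q n := by
  induction n with
  | zero => simp [risingFactorial]
  | succ n ih =>
    simp only [risingFactorial, Nat.cast_succ]
    linear_combination (q + n) * ih

theorem abs_hyperCoeff_le_one {a b : ℝ} (ha : |a| ≤ 1) (hb : |b| ≤ 1) (n : ℕ) :
    |hyperCoeff a b 1 n| ≤ 1 := by
  have hfac : (0 : ℝ) < n.factorial := by positivity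
  rw [hyperCoeff, risingFactorial_one, abs_div, abs_mul, abs_mul, Nat.abs_cast,
    div_le_one (by positivity)]
  exact mul_le_mul (abs_risingFactorial_le_factorial ha n)
    (abs_risingFactorial_le_factorial hb n) (abs_nonneg _) hfac.le

theorem hyperCoeff_neg_half_succ (n : ℕ) :
    hyperCoeff (-(1 / 2)) (1 / 2) 1 (n + 1) =
      (2 * n + 3) * hyperCoeff (1 / 2) (1 / 2) 1 (n + 1) -
        (2 * n + 1) * hyperCoeff (1 / 2) (1 / 2) 1 n := by
  have hshift := risingFactorial_sub_one_mul (1 / 2) n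
  norm_num at hshift
  have hfac : (n.factorial : ℝ) ≠ 0 := by positivity
  simp only [hyperCoeff, risingFactorial, risingFactorial_one, Nat.factorial_succ]
  push_cast
  field_simp
  linear_combination 2 * (2 * n + 1) * risingFactorial (1 / 2) n * hshift

section PowerSeries

variable {c : ℕ → ℝ} {x : ℝ}

theorem summable_mul_pow_of_abs_le {C : ℝ} (hc : ∀ n, |c n| ≤ C * (n + 1)) (hx : |x| < 1) :
    Summable fun n => c n * x ^ n := by
  have hgeom : Summable fun n : ℕ => ((n : ℝ) + 1) * |x| ^ n := by
    have hpow := summable_pow_mul_geometric_of_norm_lt_one 1 (by rwa [Real.norm_eq_abs, abs_abs])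
    simpa [add_mul, pow_one] using hpow.add (summable_geometric_of_lt_one (abs_nonneg x) hx)
  refine .of_norm_bounded (hgeom.mul_left C) fun n => ?_
  rw [Real.norm_eq_abs, abs_mul, abs_pow, ← mul_assoc]
  exact mul_le_mul_of_nonneg_right (hc n) (by positivity)

theorem summable_mul_pow_of_abs_le_const {C : ℝ} (hc : ∀ n, |c n| ≤ C) (hx : |x| < 1) :
    Summable fun n => c n * x ^ n :=
  summable_mul_pow_of_abs_le (C := |C|) (fun n => (hc n).trans ((le_abs_self C).trans
    (le_mul_of_one_le_right (abs_nonneg C) (by linarith [(n.cast_nonneg : (0 : ℝ) ≤ n)])))) hx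

theorem hasDerivAt_tsum_mul_pow {C : ℝ} (hc : ∀ n, |c n| ≤ C) (hx : |x| < 1) :
    HasDerivAt (fun y => ∑' n, c n * y ^ n) (∑' n, c n * (n * x ^ (n - 1))) x := by
  obtain ⟨r, hxr, hr1⟩ := exists_between hx
  have hr0 : 0 ≤ r := (abs_nonneg x).trans hxr.le
  have hbound : Summable fun n : ℕ => C * (n * r ^ (n - 1)) := by
    refine Summable.mul_left C ((summable_nat_add_iff 1).1 ?_)
    refine (summable_mul_pow_of_abs_le (C := 1) (c := fun n => (n : ℝ) + 1) (fun n => ?_)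
      (by rwa [abs_of_nonneg hr0])).congr fun n => ?_
    · rw [one_mul, abs_of_nonneg (by positivity)]
    · simp
  refine hasDerivAt_tsum_of_isPreconnected hbound Metric.isOpen_ball
    (convex_ball 0 r).isPreconnected (fun n y _ => (hasDerivAt_pow n y).const_mul (c n))
    (fun n y hy => ?_) (y₀ := x) (by simpa using hxr)
    (summable_mul_pow_of_abs_le_const hc hx) (by simpa using hxr)
  rw [mem_ball_zero_iff, Real.norm_eq_abs] at hy
  rw [Real.norm_eq_abs, abs_mul, abs_mul, abs_pow, Nat.abs_cast]
  exact mul_le_mul (hc n) (by gcongr) (by positivity) ((abs_nonneg _).trans (hc n))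

theorem mul_tsum_mul_pow_pred :
    x * ∑' n, c n * (n * x ^ (n - 1)) = ∑' n, n * c n * x ^ n := by
  rw [← tsum_mul_left]
  refine tsum_congr fun n => ?_
  cases n with
  | zero => simp
  | succ n => rw [Nat.add_sub_cancel, pow_succ]; ring

theorem one_sub_mul_tsum_mul_pow (hc : Summable fun n => c n * x ^ n) :
    (1 - x) * ∑' n, c n * x ^ n = c 0 + ∑' n, (c (n + 1) - c n) * x ^ (n + 1) := by
  have hshift : Summable fun n => c (n + 1) * x ^ (n + 1) := (summable_nat_add_iff 1).2 hc
  have hmul : Summable fun n => c n * x ^ (n + 1) :=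
    (hc.mul_left x).congr fun n => by ring
  have hsplit : ∑' n, c n * x ^ n = c 0 + ∑' n, c (n + 1) * x ^ (n + 1) := by
    simpa using hc.tsum_eq_zero_add
  have hmul_tsum : x * ∑' n, c n * x ^ n = ∑' n, c n * x ^ (n + 1) := by
    rw [← tsum_mul_left]
    exact tsum_congr fun n => by ring
  calc (1 - x) * ∑' n, c n * x ^ n = ∑' n, c n * x ^ n - x * ∑' n, c n * x ^ n := by ring
    _ = c 0 + ∑' n, (c (n + 1) * x ^ (n + 1) - c n * x ^ (n + 1)) := by
      rw [hmul_tsum, hshift.tsum_sub hmul, hsplit]; ring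
    _ = c 0 + ∑' n, (c (n + 1) - c n) * x ^ (n + 1) := by
      congr 1
      exact tsum_congr fun n => by ring

end PowerSeries

theorem abs_hyperCoeff_half_half_le_one (n : ℕ) : |hyperCoeff (1 / 2) (1 / 2) 1 n| ≤ 1 :=
  abs_hyperCoeff_le_one (by norm_num [abs_of_pos]) (by norm_num [abs_of_pos]) n

theorem one_sub_mul_tsum_odd_mul_hyperCoeff {x : ℝ} (hx : |x| < 1) :
    (1 - x) * ∑' n : ℕ, (2 * n + 1) * hyperCoeff (1 / 2) (1 / 2) 1 n * x ^ n =
      hyperF (-(1 / 2)) (1 / 2) 1 x := by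
  have hodd : Summable fun n : ℕ => (2 * n + 1) * hyperCoeff (1 / 2) (1 / 2) 1 n * x ^ n := by
    refine summable_mul_pow_of_abs_le (C := 2) (fun n => ?_) hx
    rw [abs_mul, abs_of_nonneg (by positivity)]
    nlinarith [abs_hyperCoeff_half_half_le_one n, abs_nonneg (hyperCoeff (1 / 2) (1 / 2) 1 n)]
  have hneg : Summable fun n => hyperCoeff (-(1 / 2)) (1 / 2) 1 n * x ^ n :=
    summable_mul_pow_of_abs_le_const
      (abs_hyperCoeff_le_one (by norm_num [abs_of_pos]) (by norm_num [abs_of_pos])) hx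
  rw [one_sub_mul_tsum_mul_pow hodd, hyperF_eq_tsum, hneg.tsum_eq_zero_add]
  simp only [hyperCoeff_zero, hyperCoeff_neg_half_succ, Nat.cast_zero, Nat.cast_succ]
  congr 1
  · norm_num
  · exact tsum_congr fun n => by ring

theorem hasDerivAt_hyperF_half_half {x : ℝ} (hx0 : x ≠ 0) (hx : |x| < 1) :
    HasDerivAt (hyperF (1 / 2) (1 / 2) 1)
      ((hyperF (-(1 / 2)) (1 / 2) 1 x - (1 - x) * hyperF (1 / 2) (1 / 2) 1 x) /
        (2 * x * (1 - x))) x := by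
  set f := hyperCoeff (1 / 2) (1 / 2) 1
  set D := ∑' n, f n * (n * x ^ (n - 1))
  have hsub : 1 - x ≠ 0 := sub_ne_zero.2 (fun h => by simp [← h] at hx)
  have hF : Summable fun n => f n * x ^ n :=
    summable_mul_pow_of_abs_le_const abs_hyperCoeff_half_half_le_one hx
  have hEuler : Summable fun n : ℕ => n * f n * x ^ n := by
    refine summable_mul_pow_of_abs_le (C := 1) (fun n => ?_) hx
    rw [abs_mul, Nat.abs_cast]
    nlinarith [abs_hyperCoeff_half_half_le_one n, abs_nonneg (f n)]
  have hodd : ∑' n : ℕ, (2 * n + 1) * f n * x ^ n = 2 * (x * D) + hyperF (1 / 2) (1 / 2) 1 x := by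
    rw [mul_tsum_mul_pow_pred, ← tsum_mul_left, hyperF_eq_tsum, ← (hEuler.mul_left 2).tsum_add hF]
    exact tsum_congr fun n => by ring
  refine (hasDerivAt_tsum_mul_pow abs_hyperCoeff_half_half_le_one hx).congr_deriv ?_
  rw [eq_div_iff (by simp [hx0, hsub]), ← one_sub_mul_tsum_odd_mul_hyperCoeff hx, hodd]
  ring

/-- The argument of `F` in `Eker x t t₀`; at `t₀ = 0` it is the `ζ` of `K0`. -/
noncomputable def kernelArg (x t t₀ : ℝ) : ℝ :=
  ((exp t - exp t₀) ^ 2 - x ^ 2) / ((exp t + exp t₀) ^ 2 - x ^ 2)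

theorem hasDerivAt_add_exp_sq_sub_sq (w x t₀ : ℝ) :
    HasDerivAt (fun s => (w + exp s) ^ 2 - x ^ 2) (2 * (w + exp t₀) * exp t₀) t₀ := by
  simpa using (((hasDerivAt_exp t₀).const_add w).pow 2).sub_const (x ^ 2)

theorem hasDerivAt_kernelArg {x t t₀ : ℝ} (hA : (exp t + exp t₀) ^ 2 - x ^ 2 ≠ 0) :
    HasDerivAt (kernelArg x t)
      (-4 * exp t * exp t₀ * (exp t ^ 2 - exp t₀ ^ 2 - x ^ 2) /
        ((exp t + exp t₀) ^ 2 - x ^ 2) ^ 2) t₀ := by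
  have dB : HasDerivAt (fun s => (exp t - exp s) ^ 2 - x ^ 2)
      (2 * (exp t - exp t₀) * -exp t₀) t₀ := by
    simpa using (((hasDerivAt_exp t₀).const_sub (exp t)).pow 2).sub_const (x ^ 2)
  exact (dB.div (hasDerivAt_add_exp_sq_sub_sq _ x t₀) hA).congr_deriv (by ring)

theorem hasDerivAt_Eker_right {x t t₀ : ℝ} (h : x ^ 2 < (exp t - exp t₀) ^ 2) :
    HasDerivAt (Eker x t)
      (1 / (2 * ((exp t - exp t₀) ^ 2 - x ^ 2) * Real.sqrt ((exp t + exp t₀) ^ 2 - x ^ 2)) *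
        ((exp t₀ ^ 2 - exp t ^ 2 + x ^ 2) * hyperF (-(1 / 2)) (1 / 2) 1 (kernelArg x t t₀) +
          2 * exp t₀ * (exp t - exp t₀) * hyperF (1 / 2) (1 / 2) 1 (kernelArg x t t₀))) t₀ := by
  have hu : 0 < exp t₀ := exp_pos _
  have hw : 0 < exp t := exp_pos _
  have hB : 0 < (exp t - exp t₀) ^ 2 - x ^ 2 := by linarith
  have hA : 0 < (exp t + exp t₀) ^ 2 - x ^ 2 := by nlinarith
  have hζ0 : 0 < kernelArg x t t₀ := div_pos hB hA
  have hζ1 : kernelArg x t t₀ < 1 := (div_lt_one hA).2 (by nlinarith)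
  have dF := (hasDerivAt_hyperF_half_half hζ0.ne' (abs_lt.2 ⟨by linarith, hζ1⟩)).comp t₀
    (hasDerivAt_kernelArg hA.ne')
  have dP : HasDerivAt (fun s => ((exp t + exp s) ^ 2 - x ^ 2) ^ (-1 / 2 : ℝ))
      (-1 / 2 * ((exp t + exp t₀) ^ 2 - x ^ 2) ^ (-1 / 2 - 1 : ℝ) *
        (2 * (exp t + exp t₀) * exp t₀)) t₀ :=
    ((hasDerivAt_add_exp_sq_sub_sq _ x t₀).rpow_const (Or.inl hA.ne')).congr_deriv (by ring)
  have hE : Eker x t = fun s =>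
      ((exp t + exp s) ^ 2 - x ^ 2) ^ (-1 / 2 : ℝ) *
        (hyperF (1 / 2) (1 / 2) 1 ∘ kernelArg x t) s := by
    funext s
    simp only [Eker, kernelArg, Function.comp_apply, add_comm (exp s)]
  rw [hE]
  refine (dP.mul dF).congr_deriv ?_
  have hrpow : ((exp t + exp t₀) ^ 2 - x ^ 2) ^ (-1 / 2 : ℝ) =
      (Real.sqrt ((exp t + exp t₀) ^ 2 - x ^ 2))⁻¹ := by
    rw [neg_div, rpow_neg hA.le, ← sqrt_eq_rpow]
  simp only [Function.comp_apply, rpow_sub hA, rpow_one, hrpow]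
  generalize hyperF (-(1 / 2)) (1 / 2) 1 (kernelArg x t t₀) = G
  generalize hyperF (1 / 2) (1 / 2) 1 (kernelArg x t t₀) = F
  have hsA := sq_sqrt hA.le
  have hs := (sqrt_pos.2 hA).ne'
  generalize Real.sqrt ((exp t + exp t₀) ^ 2 - x ^ 2) = s at hsA hs ⊢
  have hBs : (exp t - exp t₀) ^ 2 - x ^ 2 = s ^ 2 - exp t * exp t₀ * 4 := by
    linear_combination -hsA
  have hB' : s ^ 2 - exp t * exp t₀ * 4 ≠ 0 := hBs ▸ hB.ne'
  have hζ1' : 1 - (s ^ 2 - exp t * exp t₀ * 4) / s ^ 2 = exp t * exp t₀ * 4 / s ^ 2 := by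
    field_simp
    ring
  rw [kernelArg, hBs, ← hsA, show x ^ 2 = (exp t + exp t₀) ^ 2 - s ^ 2 by linear_combination hsA,
    hζ1']
  field_simp
  ring

theorem statement7_general (t z : ℝ) (hz : 0 ≤ z) (hz' : z < Real.exp t - 1) :
    HasDerivAt (fun b => Eker z t b)
      (1 / (2 * ((Real.exp t - 1) ^ 2 - z ^ 2) * Real.sqrt ((Real.exp t + 1) ^ 2 - z ^ 2)) *
        ((1 - Real.exp (2 * t) + z ^ 2) *
            hyperF (-(1 / 2)) (1 / 2) 1
              (((Real.exp t - 1) ^ 2 - z ^ 2) / ((Real.exp t + 1) ^ 2 - z ^ 2))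
          + 2 * (Real.exp t - 1) *
            hyperF (1 / 2) (1 / 2) 1
              (((Real.exp t - 1) ^ 2 - z ^ 2) / ((Real.exp t + 1) ^ 2 - z ^ 2))))
      0 ∧
    1 / (2 * ((Real.exp t - 1) ^ 2 - z ^ 2) * Real.sqrt ((Real.exp t + 1) ^ 2 - z ^ 2)) *
        ((1 - Real.exp (2 * t) + z ^ 2) *
            hyperF (-(1 / 2)) (1 / 2) 1
              (((Real.exp t - 1) ^ 2 - z ^ 2) / ((Real.exp t + 1) ^ 2 - z ^ 2))
          + 2 * (Real.exp t - 1) *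
            hyperF (1 / 2) (1 / 2) 1
              (((Real.exp t - 1) ^ 2 - z ^ 2) / ((Real.exp t + 1) ^ 2 - z ^ 2)))
      = -K0 z t := by
  have hz2 : z ^ 2 < (exp t - exp 0) ^ 2 := by
    rw [exp_zero]
    exact pow_lt_pow_left₀ hz' hz two_ne_zero
  refine ⟨?_, by rw [K0, neg_mul, neg_neg]⟩
  convert hasDerivAt_Eker_right hz2 using 1
  simp only [kernelArg, exp_zero, one_pow, mul_one, ← exp_nat_mul, Nat.cast_ofNat]

theorem statement7 (t z : ℝ) (ht : 0 < t) (hz : 0 ≤ z) (hz' : z < Real.exp t - 1) :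
    HasDerivAt (fun b => Eker z t b)
      (1 / (2 * ((Real.exp t - 1) ^ 2 - z ^ 2) * Real.sqrt ((Real.exp t + 1) ^ 2 - z ^ 2)) *
        ((1 - Real.exp (2 * t) + z ^ 2) *
            hyperF (-(1 / 2)) (1 / 2) 1
              (((Real.exp t - 1) ^ 2 - z ^ 2) / ((Real.exp t + 1) ^ 2 - z ^ 2))
          + 2 * (Real.exp t - 1) *
            hyperF (1 / 2) (1 / 2) 1
              (((Real.exp t - 1) ^ 2 - z ^ 2) / ((Real.exp t + 1) ^ 2 - z ^ 2))))
      0 ∧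
    1 / (2 * ((Real.exp t - 1) ^ 2 - z ^ 2) * Real.sqrt ((Real.exp t + 1) ^ 2 - z ^ 2)) *
        ((1 - Real.exp (2 * t) + z ^ 2) *
            hyperF (-(1 / 2)) (1 / 2) 1
              (((Real.exp t - 1) ^ 2 - z ^ 2) / ((Real.exp t + 1) ^ 2 - z ^ 2))
          + 2 * (Real.exp t - 1) *
            hyperF (1 / 2) (1 / 2) 1
              (((Real.exp t - 1) ^ 2 - z ^ 2) / ((Real.exp t + 1) ^ 2 - z ^ 2)))
      = -K0 z t :=
  statement7_general t z hz hz'
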